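/- Let q ∈ [1, 2) and let μ be a finitely supported isotropic Borel probability measure on ℝ^d (i.e. ∫ x xᵀ dμ(x) = (1/d) I_d) whose support contains two nonzero orthogonal vectors u and u₁ with ⟨u, u₁⟩ = 0. Then μ is not a local maximizer of the q-th moment: for every ε > 0 there exists a finitely supported isotropic Borel probability measure ν on ℝ^d whose Lévy–Prokhorov distance to μ is less than ε and such that ∫∫ |⟨x, y⟩|^q dν(x) dν(y) > ∫∫ |⟨x, y⟩|^q dμ(x) dμ(y). -/

import Mathlib

open MeasureTheory
open scoped ENNReal

section helpers
variable {E : Type*} [MeasurableSpace E] [MeasurableSingletonClass E]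

lemma aux_integrable_smul_dirac (f : E → ℝ) (p : E) (w : ℝ≥0∞) (hw : w ≠ ∞) :
    Integrable f (w • Measure.dirac p) := by
  have hae : f =ᵐ[Measure.dirac p] (fun _ => f p) := by
    refine measure_mono_null (fun x hx => ?_) (?_ : Measure.dirac p {p}ᶜ = 0)
    · simp only [Set.mem_compl_iff, Set.mem_singleton_iff]
      intro hxp
      exact hx (by simp [hxp])
    · simp [Measure.dirac_apply' _ (MeasurableSet.compl (measurableSet_singleton p))]
  exact ((integrable_const (f p)).congr hae.symm).smul_measure hw

lemma aux_integral_smul_dirac (f : E → ℝ) (p : E) (w : ℝ≥0∞) :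
    ∫ x, f x ∂(w • Measure.dirac p) = w.toReal * f p := by
  rw [integral_smul_measure, integral_dirac, smul_eq_mul]

lemma aux_integrable_sum_dirac {ι : Type*} (I : Finset ι) (w : ι → ℝ≥0∞) (p : ι → E)
    (hw : ∀ i ∈ I, w i ≠ ∞) (f : E → ℝ) :
    Integrable f (∑ i ∈ I, w i • Measure.dirac (p i)) :=
  integrable_finset_sum_measure.2 fun i hi => aux_integrable_smul_dirac f (p i) (w i) (hw i hi)

lemma aux_integral_sum_dirac {ι : Type*} (I : Finset ι) (w : ι → ℝ≥0∞) (p : ι → E)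
    (hw : ∀ i ∈ I, w i ≠ ∞) (f : E → ℝ) :
    ∫ x, f x ∂(∑ i ∈ I, w i • Measure.dirac (p i)) = ∑ i ∈ I, (w i).toReal * f (p i) := by
  rw [integral_finset_sum_measure fun i hi => aux_integrable_smul_dirac f (p i) (w i) (hw i hi)]
  exact Finset.sum_congr rfl fun i _ => aux_integral_smul_dirac f (p i) (w i)

/-- A measure with finite support equals a sum of weighted diracs. -/
lemma aux_measure_eq_sum_dirac (μ : Measure E) (S : Finset E) (hS : μ (↑S)ᶜ = 0) :
    μ = ∑ s ∈ S, μ {s} • Measure.dirac s := by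
  classical
  ext A hA
  have h1 : μ A = μ (A ∩ ↑S) := by
    refine le_antisymm ?_ (measure_mono Set.inter_subset_left)
    have h0 : μ (A \ ↑S) = 0 := measure_mono_null (fun x hx => hx.2) hS
    calc μ A = μ (A ∩ ↑S ∪ A \ ↑S) := by rw [Set.inter_union_diff]
      _ ≤ μ (A ∩ ↑S) + μ (A \ ↑S) := measure_union_le _ _
      _ = μ (A ∩ ↑S) := by rw [h0, add_zero]
  have h2 : (A ∩ ↑S : Set E) = ↑(S.filter (· ∈ A)) := by
    ext x; simp [and_comm]
  have h3 : μ (↑(S.filter (· ∈ A))) = ∑ s ∈ S.filter (· ∈ A), μ {s} := by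
    have := sum_measure_preimage_singleton (μ := μ) (S.filter (· ∈ A)) (f := id)
      (fun y _ => by simpa using measurableSet_singleton y)
    simpa using this.symm
  rw [h1, h2, h3, Measure.finset_sum_apply]
  rw [Finset.sum_filter]
  refine Finset.sum_congr rfl fun s _ => ?_
  rw [Measure.smul_apply, Measure.dirac_apply' _ hA, smul_eq_mul]
  by_cases hs : s ∈ A <;> simp [hs, Set.indicator]

end helpers

lemma aux_rpow_midpoint {q : ℝ} (hq : 1 ≤ q) {x y : ℝ} (hx : 0 ≤ x) (hy : 0 ≤ y) :
    ((x + y)/2) ^ q ≤ (x ^ q + y ^ q)/2 := by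
  have h := (convexOn_rpow hq).2 hx hy (by norm_num : (0:ℝ) ≤ 1/2)
    (by norm_num : (0:ℝ) ≤ 1/2) (by norm_num)
  simp only [smul_eq_mul] at h
  have e1 : (1/2 : ℝ) * x + 1/2 * y = (x+y)/2 := by ring
  have e2 : (1/2 : ℝ) * x ^ q + 1/2 * y ^ q = (x ^ q + y ^ q)/2 := by ring
  rw [e1, e2] at h
  exact h

lemma aux_convex {q : ℝ} (hq : 1 ≤ q) (X Y : ℝ) :
    |X| ^ q ≤ (|X + Y| ^ q + |X - Y| ^ q)/2 := by
  have habs : |X| ≤ (|X + Y| + |X - Y|)/2 := by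
    have h2 : |(X + Y) + (X - Y)| ≤ |X + Y| + |X - Y| := abs_add_le _ _
    have h3 : |(X + Y) + (X - Y)| = 2 * |X| := by
      rw [show (X + Y) + (X - Y) = 2 * X by ring, abs_mul]
      norm_num
    linarith
  calc |X| ^ q ≤ ((|X + Y| + |X - Y|)/2) ^ q :=
        Real.rpow_le_rpow (abs_nonneg X) habs (le_trans zero_le_one hq)
    _ ≤ (|X + Y| ^ q + |X - Y| ^ q)/2 := aux_rpow_midpoint hq (abs_nonneg _) (abs_nonneg _)

lemma aux_bern {q : ℝ} (hq : 1 ≤ q) {x : ℝ} (hx : x ≤ 1) :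
    1 - q * x ≤ (1 - x) ^ q := by
  have h := one_add_mul_self_le_rpow_one_add (s := -x) (by linarith) hq
  have e : (1 : ℝ) + -x = 1 - x := by ring
  rw [e] at h
  calc 1 - q * x = 1 + q * (-x) := by ring
    _ ≤ (1 - x) ^ q := h

section split
variable {E : Type*} [MeasurableSpace E]

open Classical in
noncomputable def splitFn (u u₁ up um vp vm : E) (f : E → ℝ) (x : E) : ℝ :=
  if x = u then (f up + f um)/2 else if x = u₁ then (f vp + f vm)/2 else f x

variable {u u₁ up um vp vm : E}

lemma splitFn_u (f : E → ℝ) : splitFn u u₁ up um vp vm f u = (f up + f um)/2 := by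
  simp [splitFn]

lemma splitFn_u₁ (h : u₁ ≠ u) (f : E → ℝ) :
    splitFn u u₁ up um vp vm f u₁ = (f vp + f vm)/2 := by
  simp [splitFn, h]

lemma splitFn_other {x : E} (h : x ≠ u) (h' : x ≠ u₁) (f : E → ℝ) :
    splitFn u u₁ up um vp vm f x = f x := by
  simp [splitFn, h, h']

lemma splitFn_integral (μ : Measure E) (g : E → E → ℝ) (hg : ∀ x, Integrable (g x) μ)
    (x : E) :
    splitFn u u₁ up um vp vm (fun x' => ∫ y, g x' y ∂μ) x
      = ∫ y, splitFn u u₁ up um vp vm (fun x' => g x' y) x ∂μ := by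
  by_cases hx : x = u
  · subst hx
    simp only [splitFn_u]
    rw [← integral_add (hg up) (hg um), ← integral_div]
  · by_cases hx₁ : x = u₁
    · subst hx₁
      simp only [splitFn_u₁ hx]
      rw [← integral_add (hg vp) (hg vm), ← integral_div]
    · simp only [splitFn_other hx hx₁]

end split

set_option maxHeartbeats 2000000 in
/-- A finitely supported isotropic probability measure on `ℝ^d` whose support contains two
nonzero orthogonal vectors is not a local maximizer of the `q`-th moment, `q ∈ [1,2)`:
arbitrarily close to it (in the Lévy–Prokhorov distance) there is a finitely supported
isotropic probability measure with strictly larger `q`-th moment. -/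
theorem isotropic_orthogonal_not_local_max (d : ℕ) (q : ℝ) (hq1 : 1 ≤ q) (hq2 : q < 2)
    (μ : Measure (EuclideanSpace ℝ (Fin d))) [IsProbabilityMeasure μ]
    (hfin : ∃ S : Finset (EuclideanSpace ℝ (Fin d)), μ (↑S)ᶜ = 0)
    (hiso : ∀ a b : Fin d, ∫ x, x a * x b ∂μ = if a = b then 1 / (d : ℝ) else 0)
    (u u₁ : EuclideanSpace ℝ (Fin d)) (hu : u ≠ 0) (hu₁ : u₁ ≠ 0)
    (horth : (inner ℝ u u₁ : ℝ) = 0)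
    (hμu : μ {u} ≠ 0) (hμu₁ : μ {u₁} ≠ 0) :
    ∀ ε : ℝ, 0 < ε →
      ∃ ν : Measure (EuclideanSpace ℝ (Fin d)),
        IsProbabilityMeasure ν ∧
        (∃ S : Finset (EuclideanSpace ℝ (Fin d)), ν (↑S)ᶜ = 0) ∧
        (∀ a b : Fin d, ∫ x, x a * x b ∂ν = if a = b then 1 / (d : ℝ) else 0) ∧
        levyProkhorovDist μ ν < ε ∧
        (∫ x, ∫ y, |(inner ℝ x y : ℝ)| ^ q ∂μ ∂μ)
          < ∫ x, ∫ y, |(inner ℝ x y : ℝ)| ^ q ∂ν ∂ν := by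
  classical
  intro ε hε
  obtain ⟨S₀, hS₀⟩ := hfin
  have hq0 : (0:ℝ) < q := lt_of_lt_of_le one_pos hq1
  -- basic setup
  have huu₁ : u ≠ u₁ := by
    intro h
    rw [← h] at horth
    exact hu (inner_self_eq_zero.mp horth)
  set S : Finset (EuclideanSpace ℝ (Fin d)) := insert u (insert u₁ S₀) with hS_def
  have hus : u ∈ S := Finset.mem_insert_self _ _
  have hu₁s : u₁ ∈ S := by simp [hS_def]
  have hS : μ (↑S)ᶜ = 0 := by
    refine measure_mono_null (Set.compl_subset_compl.mpr ?_) hS₀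
    intro x hx
    simp [hS_def]
    tauto
  have hrep : μ = ∑ s ∈ S, μ {s} • Measure.dirac s := aux_measure_eq_sum_dirac μ S hS
  have Iμ : ∀ f : EuclideanSpace ℝ (Fin d) → ℝ,
      ∫ x, f x ∂μ = ∑ s ∈ S, (μ {s}).toReal * f s := by
    intro f
    conv_lhs => rw [hrep]
    exact aux_integral_sum_dirac S (fun s => μ {s}) (fun s => s)
      (fun s _ => measure_ne_top μ _) f
  have Intμ : ∀ f : EuclideanSpace ℝ (Fin d) → ℝ, Integrable f μ := by
    intro f
    rw [hrep]
    exact aux_integrable_sum_dirac S (fun s => μ {s}) (fun s => s)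
      (fun s _ => measure_ne_top μ _) f
  -- weights and norms
  set a : ℝ := (μ {u}).toReal with ha_def
  set b : ℝ := (μ {u₁}).toReal with hb_def
  have ha : 0 < a := ENNReal.toReal_pos hμu (measure_ne_top μ _)
  have hb : 0 < b := ENNReal.toReal_pos hμu₁ (measure_ne_top μ _)
  set α : ℝ := ‖u‖ with hα_def
  set β : ℝ := ‖u₁‖ with hβ_def
  have hα : 0 < α := norm_pos_iff.mpr hu
  have hβ : 0 < β := norm_pos_iff.mpr hu₁
  set ρ : ℝ := α / β with hρ_def
  have hρ : 0 < ρ := div_pos hα hβ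
  set w : ℝ := Real.sqrt (a / b) with hw_def
  have hw : 0 < w := Real.sqrt_pos.mpr (div_pos ha hb)
  have hw2 : b * w ^ 2 = a := by
    rw [hw_def, Real.sq_sqrt (le_of_lt (div_pos ha hb))]
    field_simp
  set K : ℝ := 1 + (ρ * w) ^ 2 with hK_def
  have hK1 : 1 ≤ K := by
    have h := sq_nonneg (ρ * w)
    linarith only [hK_def, h]
  have hKpos : 0 < K := lt_of_lt_of_le one_pos hK1
  set M : ℝ := ∫ x, ∫ y, |(inner ℝ x y : ℝ)| ^ q ∂μ ∂μ with hM_def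
  have hM0 : 0 ≤ M := integral_nonneg fun x =>
    integral_nonneg fun y => Real.rpow_nonneg (abs_nonneg _) q
  set Y : ℝ := a * b * (α * β) ^ q / 2 with hY_def
  have hαβq : 0 < (α * β) ^ q := Real.rpow_pos_of_pos (mul_pos hα hβ) q
  have hY : 0 < Y := by positivity
  -- choice of t
  set t₁ : ℝ := Real.sqrt (1 / (2 * q * K)) with ht₁_def
  set t₂ : ℝ := ε / (4 * α + 1) with ht₂_def
  set t₃ : ℝ := ε / (4 * α * w + 1) with ht₃_def
  have hqKM : 0 < q * K * M + 1 := by positivity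
  set t₄ : ℝ := (Y / (q * K * M + 1)) ^ (1 / (2 - q)) with ht₄_def
  have ht₁ : 0 < t₁ := Real.sqrt_pos.mpr (by positivity)
  have ht₂ : 0 < t₂ := by positivity
  have ht₃ : 0 < t₃ := by positivity
  have ht₄ : 0 < t₄ := Real.rpow_pos_of_pos (by positivity) _
  set t : ℝ := min (min t₁ t₂) (min t₃ t₄) with ht_def
  have ht : 0 < t := lt_min (lt_min ht₁ ht₂) (lt_min ht₃ ht₄)
  have ht_le₁ : t ≤ t₁ := le_trans (min_le_left _ _) (min_le_left _ _)
  have ht_le₂ : t ≤ t₂ := le_trans (min_le_left _ _) (min_le_right _ _)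
  have ht_le₃ : t ≤ t₃ := le_trans (min_le_right _ _) (min_le_left _ _)
  have ht_le₄ : t ≤ t₄ := le_trans (min_le_right _ _) (min_le_right _ _)
  have htsq : t ^ 2 ≤ 1 / (2 * q * K) := by
    have := (Real.le_sqrt ht.le (by positivity)).mp ht_le₁
    exact this
  have hqKt : q * K * t ^ 2 ≤ 1 / 2 := by
    have h1 : q * K * t ^ 2 ≤ q * K * (1 / (2 * q * K)) :=
      mul_le_mul_of_nonneg_left htsq (by positivity)
    have h2 : q * K * (1 / (2 * q * K)) = 1 / 2 := by
      field_simp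
    linarith
  have hKt : K * t ^ 2 ≤ 1 / 2 := by
    calc K * t ^ 2 ≤ q * (K * t ^ 2) := le_mul_of_one_le_left (by positivity) hq1
      _ = q * K * t ^ 2 := by ring
      _ ≤ 1 / 2 := hqKt
  have ht2half : t ^ 2 ≤ 1 / 2 := by
    calc t ^ 2 ≤ K * t ^ 2 := le_mul_of_one_le_left (by positivity) hK1
      _ ≤ 1 / 2 := hKt
  have ht_le_one : t ≤ 1 := by
    have h1 : t = Real.sqrt (t ^ 2) := (Real.sqrt_sq ht.le).symm
    rw [h1]
    exact Real.sqrt_le_one.mpr (by linarith only [ht2half])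
  have hs₁sq : (t * (ρ * w)) ^ 2 ≤ 1 / 2 := by
    calc (t * (ρ * w)) ^ 2 = (ρ * w) ^ 2 * t ^ 2 := by ring
      _ ≤ K * t ^ 2 := by
          have : (ρ * w) ^ 2 ≤ K := by rw [hK_def]; linarith
          exact mul_le_mul_of_nonneg_right this (sq_nonneg t)
      _ ≤ 1 / 2 := hKt
  have hs₁_le_one : t * (ρ * w) ≤ 1 := by
    have hpos : 0 ≤ t * (ρ * w) := by positivity
    have h1 : t * (ρ * w) = Real.sqrt ((t * (ρ * w)) ^ 2) := (Real.sqrt_sq hpos).symm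
    rw [h1]
    exact Real.sqrt_le_one.mpr (by linarith only [hs₁sq])
  -- the rotated points
  set c₁ : ℝ := Real.sqrt (1 - t ^ 2) with hc₁_def
  set c₂ : ℝ := Real.sqrt (1 - (t * (ρ * w)) ^ 2) with hc₂_def
  have hc₁sq : c₁ ^ 2 = 1 - t ^ 2 := Real.sq_sqrt (by linarith)
  have hc₂sq : c₂ ^ 2 = 1 - (t * (ρ * w)) ^ 2 := Real.sq_sqrt (by linarith)
  have hc₁pos : 0 < c₁ := Real.sqrt_pos.mpr (by linarith)
  have hc₂pos : 0 < c₂ := Real.sqrt_pos.mpr (by linarith)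
  have hc₁le : c₁ ≤ 1 := Real.sqrt_le_one.mpr (by linarith only [sq_nonneg t])
  have hc₂le : c₂ ≤ 1 := Real.sqrt_le_one.mpr (by linarith only [sq_nonneg (t * (ρ * w))])
  have hc₁lb : 1 - t ≤ c₁ := by
    have hsq : t ^ 2 ≤ t := by
      calc t ^ 2 = t * t := sq t
        _ ≤ 1 * t := mul_le_mul_of_nonneg_right ht_le_one ht.le
        _ = t := one_mul t
    have h1 : (1 - t) ^ 2 ≤ 1 - t ^ 2 := by
      calc (1 - t) ^ 2 = 1 - 2 * t + t ^ 2 := by ring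
        _ ≤ 1 - t ^ 2 := by linarith only [hsq]
    have h2 := Real.sqrt_le_sqrt h1
    rwa [Real.sqrt_sq (by linarith)] at h2
  have hc₂lb : 1 - t * (ρ * w) ≤ c₂ := by
    have hpos : 0 ≤ t * (ρ * w) := by positivity
    have hsq : (t * (ρ * w)) ^ 2 ≤ t * (ρ * w) := by
      calc (t * (ρ * w)) ^ 2 = (t * (ρ * w)) * (t * (ρ * w)) := sq _
        _ ≤ 1 * (t * (ρ * w)) := mul_le_mul_of_nonneg_right hs₁_le_one hpos
        _ = t * (ρ * w) := one_mul _
    have h1 : (1 - t * (ρ * w)) ^ 2 ≤ 1 - (t * (ρ * w)) ^ 2 := by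
      calc (1 - t * (ρ * w)) ^ 2 = 1 - 2 * (t * (ρ * w)) + (t * (ρ * w)) ^ 2 := by ring
        _ ≤ 1 - (t * (ρ * w)) ^ 2 := by linarith only [hsq]
    have h2 := Real.sqrt_le_sqrt h1
    rwa [Real.sqrt_sq (by linarith)] at h2
  set up : EuclideanSpace ℝ (Fin d) := c₁ • u + (t * ρ) • u₁ with hup_def
  set um : EuclideanSpace ℝ (Fin d) := c₁ • u - (t * ρ) • u₁ with hum_def
  set vp : EuclideanSpace ℝ (Fin d) := c₂ • u₁ + (t * w) • u with hvp_def
  set vm : EuclideanSpace ℝ (Fin d) := c₂ • u₁ - (t * w) • u with hvm_def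
  -- inner product expansions
  have hipL : ∀ y, (inner ℝ up y : ℝ) = c₁ * inner ℝ u y + (t * ρ) * inner ℝ u₁ y := fun y => by
    rw [hup_def, inner_add_left, real_inner_smul_left, real_inner_smul_left]
  have himL : ∀ y, (inner ℝ um y : ℝ) = c₁ * inner ℝ u y - (t * ρ) * inner ℝ u₁ y := fun y => by
    rw [hum_def, inner_sub_left, real_inner_smul_left, real_inner_smul_left]
  have hvpL : ∀ y, (inner ℝ vp y : ℝ) = c₂ * inner ℝ u₁ y + (t * w) * inner ℝ u y := fun y => by
    rw [hvp_def, inner_add_left, real_inner_smul_left, real_inner_smul_left]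
  have hvmL : ∀ y, (inner ℝ vm y : ℝ) = c₂ * inner ℝ u₁ y - (t * w) * inner ℝ u y := fun y => by
    rw [hvm_def, inner_sub_left, real_inner_smul_left, real_inner_smul_left]
  have hipR : ∀ x, (inner ℝ x up : ℝ) = c₁ * inner ℝ x u + (t * ρ) * inner ℝ x u₁ := fun x => by
    rw [hup_def, inner_add_right, real_inner_smul_right, real_inner_smul_right]
  have himR : ∀ x, (inner ℝ x um : ℝ) = c₁ * inner ℝ x u - (t * ρ) * inner ℝ x u₁ := fun x => by
    rw [hum_def, inner_sub_right, real_inner_smul_right, real_inner_smul_right]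
  have hvpR : ∀ x, (inner ℝ x vp : ℝ) = c₂ * inner ℝ x u₁ + (t * w) * inner ℝ x u := fun x => by
    rw [hvp_def, inner_add_right, real_inner_smul_right, real_inner_smul_right]
  have hvmR : ∀ x, (inner ℝ x vm : ℝ) = c₂ * inner ℝ x u₁ - (t * w) * inner ℝ x u := fun x => by
    rw [hvm_def, inner_sub_right, real_inner_smul_right, real_inner_smul_right]
  have huu : (inner ℝ u u : ℝ) = α ^ 2 := real_inner_self_eq_norm_sq u
  have hu₁u₁ : (inner ℝ u₁ u₁ : ℝ) = β ^ 2 := real_inner_self_eq_norm_sq u₁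
  have horth' : (inner ℝ u₁ u : ℝ) = 0 := by rw [real_inner_comm]; exact horth
  -- the measure ν
  set T : Finset (EuclideanSpace ℝ (Fin d)) := S \ {u, u₁} with hT_def
  have hsub2 : ({u, u₁} : Finset (EuclideanSpace ℝ (Fin d))) ⊆ S := by
    intro x hx
    simp only [Finset.mem_insert, Finset.mem_singleton] at hx
    rcases hx with h | h <;> subst h <;> assumption
  set P4 : Fin 4 → EuclideanSpace ℝ (Fin d) := ![up, um, vp, vm] with hP4_def
  set W4 : Fin 4 → ℝ≥0∞ := ![μ {u} / 2, μ {u} / 2, μ {u₁} / 2, μ {u₁} / 2] with hW4_def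
  have hW4ne : ∀ i ∈ Finset.univ, W4 i ≠ ∞ := by
    intro i _
    fin_cases i <;> simp [hW4_def] <;>
      exact (ENNReal.div_lt_top (measure_ne_top μ _) (by norm_num)).ne
  set ν : Measure (EuclideanSpace ℝ (Fin d)) :=
    (∑ s ∈ T, μ {s} • Measure.dirac s) + ∑ i : Fin 4, W4 i • Measure.dirac (P4 i)
    with hν_def
  -- integral formula for ν
  have Iν : ∀ f : EuclideanSpace ℝ (Fin d) → ℝ,
      ∫ x, f x ∂ν = (∑ s ∈ T, (μ {s}).toReal * f s)
        + (a / 2 * f up + a / 2 * f um + b / 2 * f vp + b / 2 * f vm) := by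
    intro f
    rw [hν_def,
      integral_add_measure
        (aux_integrable_sum_dirac T (fun s => μ {s}) (fun s => s)
          (fun s _ => measure_ne_top μ _) f)
        (aux_integrable_sum_dirac Finset.univ W4 P4 hW4ne f),
      aux_integral_sum_dirac T (fun s => μ {s}) (fun s => s)
        (fun s _ => measure_ne_top μ _) f,
      aux_integral_sum_dirac Finset.univ W4 P4 hW4ne f]
    congr 1
    rw [Fin.sum_univ_four]
    simp only [hW4_def, hP4_def, Matrix.cons_val_zero, Matrix.cons_val_one, Matrix.head_cons,
      Matrix.cons_val_two, Matrix.tail_cons, Matrix.cons_val_three, Matrix.head_fin_const]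
    rw [ENNReal.toReal_div, ENNReal.toReal_div, ← ha_def, ← hb_def]
    norm_num
  have Intν : ∀ f : EuclideanSpace ℝ (Fin d) → ℝ, Integrable f ν := by
    intro f
    rw [hν_def]
    exact Integrable.add_measure
      (aux_integrable_sum_dirac T (fun s => μ {s}) (fun s => s)
        (fun s _ => measure_ne_top μ _) f)
      (aux_integrable_sum_dirac Finset.univ W4 P4 hW4ne f)
  -- key: integrals against ν are integrals of split functions against μ
  have L1 : ∀ f : EuclideanSpace ℝ (Fin d) → ℝ,
      ∫ x, f x ∂ν = ∫ x, splitFn u u₁ up um vp vm f x ∂μ := by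
    intro f
    rw [Iν f, Iμ (splitFn u u₁ up um vp vm f), ← Finset.sum_sdiff hsub2]
    have hpair : ∑ s ∈ ({u, u₁} : Finset (EuclideanSpace ℝ (Fin d))),
        (μ {s}).toReal * splitFn u u₁ up um vp vm f s
        = a * ((f up + f um)/2) + b * ((f vp + f vm)/2) := by
      rw [Finset.sum_insert (by simp [huu₁]), Finset.sum_singleton, splitFn_u,
        splitFn_u₁ (Ne.symm huu₁), ← ha_def, ← hb_def]
    rw [hpair]
    have hTpart : ∀ s ∈ S \ {u, u₁},
        (μ {s}).toReal * splitFn u u₁ up um vp vm f s = (μ {s}).toReal * f s := by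
      intro s hs
      rw [Finset.mem_sdiff] at hs
      have h1 : s ≠ u := fun h => hs.2 (by simp [h])
      have h2 : s ≠ u₁ := fun h => hs.2 (by simp [h])
      rw [splitFn_other h1 h2]
    rw [Finset.sum_congr rfl hTpart, ← hT_def]
    ring
  -- ν is a probability measure
  have hν_prob : IsProbabilityMeasure ν := by
    constructor
    have huniv : ∑ s ∈ S, μ {s} = 1 := by
      have h := congrArg (fun m : Measure (EuclideanSpace ℝ (Fin d)) => m Set.univ) hrep
      simp only [measure_univ, Measure.finset_sum_apply, Measure.smul_apply,
        Measure.dirac_apply_of_mem (Set.mem_univ _), smul_eq_mul, mul_one] at h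
      exact h.symm
    rw [← Finset.sum_sdiff hsub2, Finset.sum_insert (by simp [huu₁]),
      Finset.sum_singleton, ← hT_def] at huniv
    rw [hν_def, Measure.add_apply, Measure.finset_sum_apply, Measure.finset_sum_apply]
    simp only [Measure.smul_apply, Measure.dirac_apply_of_mem (Set.mem_univ _),
      smul_eq_mul, mul_one]
    rw [Fin.sum_univ_four]
    simp only [hW4_def, Matrix.cons_val_zero, Matrix.cons_val_one, Matrix.head_cons,
      Matrix.cons_val_two, Matrix.tail_cons, Matrix.cons_val_three, Matrix.head_fin_const]
    rw [ENNReal.add_halves, add_assoc (μ {u}), ENNReal.add_halves]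
    exact huniv
  haveI := hν_prob
  -- finite support
  have hν_fin : ∃ S' : Finset (EuclideanSpace ℝ (Fin d)), ν (↑S')ᶜ = 0 := by
    refine ⟨S ∪ {up, um, vp, vm}, ?_⟩
    set S' : Finset (EuclideanSpace ℝ (Fin d)) := S ∪ {up, um, vp, vm} with hS'_def
    have hmble : MeasurableSet ((↑S' : Set (EuclideanSpace ℝ (Fin d)))ᶜ) :=
      (Finset.measurableSet S').compl
    have hdirac : ∀ p : EuclideanSpace ℝ (Fin d), p ∈ S' →
        Measure.dirac p ((↑S' : Set (EuclideanSpace ℝ (Fin d)))ᶜ) = 0 := by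
      intro p hp
      rw [Measure.dirac_apply' _ hmble]
      simp [hp]
    rw [hν_def, Measure.add_apply, Measure.finset_sum_apply, Measure.finset_sum_apply]
    rw [Finset.sum_eq_zero, Finset.sum_eq_zero, add_zero]
    · intro i _
      have hp : P4 i ∈ S' := by
        fin_cases i <;> simp [hP4_def, hS'_def]
      rw [Measure.smul_apply, hdirac (P4 i) hp, smul_zero]
    · intro s hs
      have hp : s ∈ S' := Finset.mem_union_left _ (Finset.mem_sdiff.mp (hT_def ▸ hs)).1
      rw [Measure.smul_apply, hdirac s hp, smul_zero]
  -- isotropy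
  have hν_iso : ∀ i j : Fin d, ∫ x, x i * x j ∂ν = if i = j then 1 / (d : ℝ) else 0 := by
    intro i j
    rw [L1, ← hiso i j, Iμ (splitFn u u₁ up um vp vm (fun x => x i * x j)),
      Iμ (fun x => x i * x j), ← Finset.sum_sdiff hsub2, ← Finset.sum_sdiff (f := fun s =>
        (μ {s}).toReal * (s i * s j)) hsub2]
    congr 1
    · refine Finset.sum_congr rfl fun s hs => ?_
      rw [Finset.mem_sdiff] at hs
      have h1 : s ≠ u := fun h => hs.2 (by simp [h])
      have h2 : s ≠ u₁ := fun h => hs.2 (by simp [h])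
      rw [splitFn_other h1 h2]
    · rw [Finset.sum_insert (by simp [huu₁]), Finset.sum_singleton,
        Finset.sum_insert (by simp [huu₁]), Finset.sum_singleton,
        splitFn_u, splitFn_u₁ (Ne.symm huu₁)]
      have h1 : ∀ z : Fin d, up z = c₁ * u z + (t * ρ) * u₁ z := fun z => by
        rw [hup_def]; simp [PiLp.add_apply, PiLp.smul_apply, smul_eq_mul]
      have h2 : ∀ z : Fin d, um z = c₁ * u z - (t * ρ) * u₁ z := fun z => by
        rw [hum_def]; simp [PiLp.sub_apply, PiLp.smul_apply, smul_eq_mul]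
      have h3 : ∀ z : Fin d, vp z = c₂ * u₁ z + (t * w) * u z := fun z => by
        rw [hvp_def]; simp [PiLp.add_apply, PiLp.smul_apply, smul_eq_mul]
      have h4 : ∀ z : Fin d, vm z = c₂ * u₁ z - (t * w) * u z := fun z => by
        rw [hvm_def]; simp [PiLp.sub_apply, PiLp.smul_apply, smul_eq_mul]
      rw [h1 i, h1 j, h2 i, h2 j, h3 i, h3 j, h4 i, h4 j, ← ha_def, ← hb_def]
      linear_combination (u i * u j * a) * hc₁sq + (u i * u j * t^2) * hw2
        + (u₁ i * u₁ j * b) * hc₂sq - (u₁ i * u₁ j * t^2 * ρ^2) * hw2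
  -- Lévy–Prokhorov distance
  have hdup : dist up u ≤ 2 * α * t := by
    rw [dist_eq_norm]
    have he : up - u = (c₁ - 1) • u + (t * ρ) • u₁ := by rw [hup_def]; module
    rw [he]
    have habs : |c₁ - 1| ≤ t := by
      rw [abs_le]; constructor <;> [linarith only [hc₁lb]; linarith only [hc₁le, ht.le]]
    calc ‖(c₁ - 1) • u + (t * ρ) • u₁‖ ≤ ‖(c₁ - 1) • u‖ + ‖(t * ρ) • u₁‖ := norm_add_le _ _
      _ = |c₁ - 1| * α + |t * ρ| * β := by
          rw [norm_smul, norm_smul, Real.norm_eq_abs, Real.norm_eq_abs, ← hα_def, ← hβ_def]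
      _ ≤ t * α + (t * ρ) * β := by
          have h2 : |t * ρ| = t * ρ := abs_of_nonneg (by positivity)
          rw [h2]
          exact add_le_add_left (mul_le_mul_of_nonneg_right habs hα.le) _
      _ = 2 * α * t := by rw [hρ_def]; field_simp; ring
  have hdum : dist um u ≤ 2 * α * t := by
    rw [dist_eq_norm]
    have he : um - u = (c₁ - 1) • u - (t * ρ) • u₁ := by rw [hum_def]; module
    rw [he]
    have habs : |c₁ - 1| ≤ t := by
      rw [abs_le]; constructor <;> [linarith only [hc₁lb]; linarith only [hc₁le, ht.le]]
    calc ‖(c₁ - 1) • u - (t * ρ) • u₁‖ ≤ ‖(c₁ - 1) • u‖ + ‖(t * ρ) • u₁‖ := norm_sub_le _ _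
      _ = |c₁ - 1| * α + |t * ρ| * β := by
          rw [norm_smul, norm_smul, Real.norm_eq_abs, Real.norm_eq_abs, ← hα_def, ← hβ_def]
      _ ≤ t * α + (t * ρ) * β := by
          have h2 : |t * ρ| = t * ρ := abs_of_nonneg (by positivity)
          rw [h2]
          exact add_le_add_left (mul_le_mul_of_nonneg_right habs hα.le) _
      _ = 2 * α * t := by rw [hρ_def]; field_simp; ring
  have hdvp : dist vp u₁ ≤ 2 * α * w * t := by
    rw [dist_eq_norm]
    have he : vp - u₁ = (c₂ - 1) • u₁ + (t * w) • u := by rw [hvp_def]; module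
    rw [he]
    have habs : |c₂ - 1| ≤ t * (ρ * w) := by
      rw [abs_le]
      constructor
      · linarith only [hc₂lb]
      · have : 0 ≤ t * (ρ * w) := by positivity
        linarith only [hc₂le, this]
    calc ‖(c₂ - 1) • u₁ + (t * w) • u‖ ≤ ‖(c₂ - 1) • u₁‖ + ‖(t * w) • u‖ := norm_add_le _ _
      _ = |c₂ - 1| * β + |t * w| * α := by
          rw [norm_smul, norm_smul, Real.norm_eq_abs, Real.norm_eq_abs, ← hα_def, ← hβ_def]
      _ ≤ (t * (ρ * w)) * β + (t * w) * α := by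
          have h2 : |t * w| = t * w := abs_of_nonneg (by positivity)
          rw [h2]
          exact add_le_add_left (mul_le_mul_of_nonneg_right habs hβ.le) _
      _ = 2 * α * w * t := by rw [hρ_def]; field_simp; ring
  have hdvm : dist vm u₁ ≤ 2 * α * w * t := by
    rw [dist_eq_norm]
    have he : vm - u₁ = (c₂ - 1) • u₁ - (t * w) • u := by rw [hvm_def]; module
    rw [he]
    have habs : |c₂ - 1| ≤ t * (ρ * w) := by
      rw [abs_le]
      constructor
      · linarith only [hc₂lb]
      · have : 0 ≤ t * (ρ * w) := by positivity
        linarith only [hc₂le, this]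
    calc ‖(c₂ - 1) • u₁ - (t * w) • u‖ ≤ ‖(c₂ - 1) • u₁‖ + ‖(t * w) • u‖ := norm_sub_le _ _
      _ = |c₂ - 1| * β + |t * w| * α := by
          rw [norm_smul, norm_smul, Real.norm_eq_abs, Real.norm_eq_abs, ← hα_def, ← hβ_def]
      _ ≤ (t * (ρ * w)) * β + (t * w) * α := by
          have h2 : |t * w| = t * w := abs_of_nonneg (by positivity)
          rw [h2]
          exact add_le_add_left (mul_le_mul_of_nonneg_right habs hβ.le) _
      _ = 2 * α * w * t := by rw [hρ_def]; field_simp; ring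
  have hbound2 : 2 * α * t ≤ ε / 2 := by
    have h1 : 2 * α * t ≤ 2 * α * t₂ := mul_le_mul_of_nonneg_left ht_le₂ (by positivity)
    have h2 : 2 * α * t₂ ≤ ε / 2 := by
      rw [ht₂_def, ← mul_div_assoc, div_le_div_iff₀ (by positivity) (by norm_num : (0:ℝ) < 2)]
      linarith only [hε]
    linarith only [h1, h2]
  have hbound3 : 2 * α * w * t ≤ ε / 2 := by
    have h1 : 2 * α * w * t ≤ 2 * α * w * t₃ := mul_le_mul_of_nonneg_left ht_le₃ (by positivity)
    have h2 : 2 * α * w * t₃ ≤ ε / 2 := by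
      rw [ht₃_def, ← mul_div_assoc, div_le_div_iff₀ (by positivity) (by norm_num : (0:ℝ) < 2)]
      linarith only [hε]
    linarith only [h1, h2]
  have hLP : levyProkhorovDist μ ν < ε := by
    have hle : levyProkhorovDist μ ν ≤ ε / 2 := by
      refine levyProkhorovDist_le_of_forall_le μ ν (by positivity) ?_
      intro δ B hδ hB
      have hδ0 : 0 < δ := lt_of_le_of_lt (by positivity) hδ
      refine le_trans ?_ le_self_add
      have hthick : B ⊆ Metric.thickening δ B := Metric.self_subset_thickening hδ0 B
      have hthick_mble : MeasurableSet (Metric.thickening δ B) :=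
        Metric.isOpen_thickening.measurableSet
      have hmem_thick : ∀ p z : EuclideanSpace ℝ (Fin d), z ∈ B → dist p z ≤ ε / 2 →
          p ∈ Metric.thickening δ B := by
        intro p z hz hd
        exact Metric.mem_thickening_iff.mpr ⟨z, hz, lt_of_le_of_lt hd hδ⟩
      conv_lhs => rw [hrep]
      rw [Measure.finset_sum_apply, ← Finset.sum_sdiff hsub2,
        Finset.sum_insert (by simp [huu₁]), Finset.sum_singleton, ← hT_def,
        hν_def, Measure.add_apply, Measure.finset_sum_apply, Fin.sum_univ_four]
      have hTle : (∑ s ∈ T, (μ {s} • Measure.dirac s) B)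
          ≤ ∑ s ∈ T, (μ {s} • Measure.dirac s) (Metric.thickening δ B) :=
        Finset.sum_le_sum fun s _ => measure_mono hthick
      have hule : (μ {u} • Measure.dirac u) B
          ≤ (W4 0 • Measure.dirac (P4 0)) (Metric.thickening δ B)
            + (W4 1 • Measure.dirac (P4 1)) (Metric.thickening δ B) := by
        simp only [Measure.smul_apply, smul_eq_mul, hW4_def, hP4_def,
          Matrix.cons_val_zero, Matrix.cons_val_one, Matrix.head_cons]
        by_cases hmem : u ∈ B
        · rw [Measure.dirac_apply' _ hB, Set.indicator_of_mem hmem,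
            Measure.dirac_apply' _ hthick_mble,
            Set.indicator_of_mem (hmem_thick up u hmem (le_trans hdup hbound2)),
            Measure.dirac_apply' _ hthick_mble,
            Set.indicator_of_mem (hmem_thick um u hmem (le_trans hdum hbound2))]
          simp [ENNReal.add_halves]
        · rw [Measure.dirac_apply' _ hB, Set.indicator_of_notMem hmem]
          simp
      have hu₁le : (μ {u₁} • Measure.dirac u₁) B
          ≤ (W4 2 • Measure.dirac (P4 2)) (Metric.thickening δ B)
            + (W4 3 • Measure.dirac (P4 3)) (Metric.thickening δ B) := by
        simp only [Measure.smul_apply, smul_eq_mul, hW4_def, hP4_def,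
          Matrix.cons_val_zero, Matrix.cons_val_one, Matrix.head_cons,
          Matrix.cons_val_two, Matrix.tail_cons, Matrix.cons_val_three, Matrix.head_fin_const]
        by_cases hmem : u₁ ∈ B
        · rw [Measure.dirac_apply' _ hB, Set.indicator_of_mem hmem,
            Measure.dirac_apply' _ hthick_mble,
            Set.indicator_of_mem (hmem_thick vp u₁ hmem (le_trans hdvp hbound3)),
            Measure.dirac_apply' _ hthick_mble,
            Set.indicator_of_mem (hmem_thick vm u₁ hmem (le_trans hdvm hbound3))]
          simp [ENNReal.add_halves]
        · rw [Measure.dirac_apply' _ hB, Set.indicator_of_notMem hmem]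
          simp
      calc ∑ s ∈ T, (μ {s} • Measure.dirac s) B
            + ((μ {u} • Measure.dirac u) B + (μ {u₁} • Measure.dirac u₁) B)
          ≤ (∑ s ∈ T, (μ {s} • Measure.dirac s) (Metric.thickening δ B))
            + (((W4 0 • Measure.dirac (P4 0)) (Metric.thickening δ B)
              + (W4 1 • Measure.dirac (P4 1)) (Metric.thickening δ B))
              + ((W4 2 • Measure.dirac (P4 2)) (Metric.thickening δ B)
              + (W4 3 • Measure.dirac (P4 3)) (Metric.thickening δ B))) :=
            add_le_add hTle (add_le_add hule hu₁le)
        _ = (∑ s ∈ T, (μ {s} • Measure.dirac s) (Metric.thickening δ B))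
            + ((W4 0 • Measure.dirac (P4 0)) (Metric.thickening δ B)
              + (W4 1 • Measure.dirac (P4 1)) (Metric.thickening δ B)
              + (W4 2 • Measure.dirac (P4 2)) (Metric.thickening δ B)
              + (W4 3 • Measure.dirac (P4 3)) (Metric.thickening δ B)) := by ring
    linarith only [hle, hε]
  -- moment increases
  have hMom : M < ∫ x, ∫ y, |(inner ℝ x y : ℝ)| ^ q ∂ν ∂ν := by
    have hF0 : ∀ x y : EuclideanSpace ℝ (Fin d), (0:ℝ) ≤ |(inner ℝ x y : ℝ)| ^ q :=
      fun x y => Real.rpow_nonneg (abs_nonneg _) q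
    set H : EuclideanSpace ℝ (Fin d) → EuclideanSpace ℝ (Fin d) → ℝ := fun x y =>
      splitFn u u₁ up um vp vm
        (fun x' => splitFn u u₁ up um vp vm (fun y' => |(inner ℝ x' y' : ℝ)| ^ q) y) x
      with hH_def
    -- Step A: the ν-double integral equals the μ-double integral of H
    have stepA : ∫ x, ∫ y, |(inner ℝ x y : ℝ)| ^ q ∂ν ∂ν = ∫ x, ∫ y, H x y ∂μ ∂μ := by
      rw [L1 (fun x => ∫ y, |(inner ℝ x y : ℝ)| ^ q ∂ν)]
      have e1 : (fun x' => ∫ y, |(inner ℝ x' y : ℝ)| ^ q ∂ν)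
          = fun x' => ∫ y, splitFn u u₁ up um vp vm (fun y' => |(inner ℝ x' y' : ℝ)| ^ q) y ∂μ :=
        funext fun x' => L1 (fun y' => |(inner ℝ x' y' : ℝ)| ^ q)
      rw [e1]
      refine integral_congr_ae (Filter.Eventually.of_forall fun x => ?_)
      rw [splitFn_integral μ
        (fun x' y => splitFn u u₁ up um vp vm (fun y' => |(inner ℝ x' y' : ℝ)| ^ q) y)
        (fun x' => Intμ _) x]
    -- double sums
    have hHsum : ∫ x, ∫ y, H x y ∂μ ∂μ
        = ∑ x ∈ S, (μ {x}).toReal * ∑ y ∈ S, (μ {y}).toReal * H x y := by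
      rw [Iμ (fun x => ∫ y, H x y ∂μ)]
      exact Finset.sum_congr rfl fun x _ => by rw [Iμ (H x)]
    have hMsum : M = ∑ x ∈ S, (μ {x}).toReal
        * ∑ y ∈ S, (μ {y}).toReal * |(inner ℝ x y : ℝ)| ^ q := by
      rw [hM_def, Iμ (fun x => ∫ y, |(inner ℝ x y : ℝ)| ^ q ∂μ)]
      exact Finset.sum_congr rfl fun x _ => by rw [Iμ (fun y => |(inner ℝ x y : ℝ)| ^ q)]
    -- constants
    set γ : ℝ := c₁ * c₂ with hγ_def
    have hγpos : 0 < γ := mul_pos hc₁pos hc₂pos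
    have hγle1 : γ ≤ 1 := by
      calc c₁ * c₂ ≤ 1 * 1 := mul_le_mul hc₁le hc₂le hc₂pos.le one_pos.le
        _ = 1 := one_mul 1
    set Cq : ℝ := γ ^ (2*q) with hCq_def
    have hCqpos : 0 < Cq := Real.rpow_pos_of_pos hγpos _
    have hCq_le_γq : Cq ≤ γ ^ q :=
      Real.rpow_le_rpow_of_exponent_ge hγpos hγle1 (by linarith only [hq0])
    have hγc₁ : γ ≤ c₁ := by
      calc c₁ * c₂ ≤ c₁ * 1 := mul_le_mul_of_nonneg_left hc₂le hc₁pos.le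
        _ = c₁ := mul_one c₁
    have hγc₂ : γ ≤ c₂ := by
      calc c₁ * c₂ ≤ 1 * c₂ := mul_le_mul_of_nonneg_right hc₁le hc₂pos.le
        _ = c₂ := one_mul c₂
    have hγq_le_c₁q : γ ^ q ≤ c₁ ^ q := Real.rpow_le_rpow hγpos.le hγc₁ hq0.le
    have hγq_le_c₂q : γ ^ q ≤ c₂ ^ q := Real.rpow_le_rpow hγpos.le hγc₂ hq0.le
    have hγq_le_one : γ ^ q ≤ 1 := Real.rpow_le_one hγpos.le hγle1 hq0.le
    have hγq_pos : 0 < γ ^ q := Real.rpow_pos_of_pos hγpos q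
    have hmulpow : ∀ (c A : ℝ), 0 ≤ c → |c * A| ^ q = c ^ q * |A| ^ q := by
      intro c A hc
      rw [abs_mul, abs_of_nonneg hc, Real.mul_rpow hc (abs_nonneg A)]
    -- x-slot split bounds
    have lem_xu : ∀ y, c₁ ^ q * |(inner ℝ u y : ℝ)| ^ q
        ≤ (|(inner ℝ up y : ℝ)| ^ q + |(inner ℝ um y : ℝ)| ^ q)/2 := by
      intro y
      rw [hipL y, himL y, ← hmulpow c₁ _ hc₁pos.le]
      exact aux_convex hq1 _ _
    have lem_xu₁ : ∀ y, c₂ ^ q * |(inner ℝ u₁ y : ℝ)| ^ q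
        ≤ (|(inner ℝ vp y : ℝ)| ^ q + |(inner ℝ vm y : ℝ)| ^ q)/2 := by
      intro y
      rw [hvpL y, hvmL y, ← hmulpow c₂ _ hc₂pos.le]
      exact aux_convex hq1 _ _
    -- y-slot split bound
    have lem_y : ∀ x' y : EuclideanSpace ℝ (Fin d), γ ^ q * |(inner ℝ x' y : ℝ)| ^ q
        ≤ splitFn u u₁ up um vp vm (fun y' => |(inner ℝ x' y' : ℝ)| ^ q) y := by
      intro x' y
      by_cases hy : y = u
      · rw [hy]
        simp only [splitFn_u]
        have h1 : c₁ ^ q * |(inner ℝ x' u : ℝ)| ^ q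
            ≤ (|(inner ℝ x' up : ℝ)| ^ q + |(inner ℝ x' um : ℝ)| ^ q)/2 := by
          rw [hipR x', himR x', ← hmulpow c₁ _ hc₁pos.le]
          exact aux_convex hq1 _ _
        have h2 : γ ^ q * |(inner ℝ x' u : ℝ)| ^ q ≤ c₁ ^ q * |(inner ℝ x' u : ℝ)| ^ q :=
          mul_le_mul_of_nonneg_right hγq_le_c₁q (hF0 _ _)
        linarith only [h1, h2]
      · by_cases hy₁ : y = u₁
        · rw [hy₁]
          simp only [splitFn_u₁ (Ne.symm huu₁)]
          have h1 : c₂ ^ q * |(inner ℝ x' u₁ : ℝ)| ^ q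
              ≤ (|(inner ℝ x' vp : ℝ)| ^ q + |(inner ℝ x' vm : ℝ)| ^ q)/2 := by
            rw [hvpR x', hvmR x', ← hmulpow c₂ _ hc₂pos.le]
            exact aux_convex hq1 _ _
          have h2 : γ ^ q * |(inner ℝ x' u₁ : ℝ)| ^ q ≤ c₂ ^ q * |(inner ℝ x' u₁ : ℝ)| ^ q :=
            mul_le_mul_of_nonneg_right hγq_le_c₂q (hF0 _ _)
          linarith only [h1, h2]
        · simp only [splitFn_other hy hy₁]
          have h2 : γ ^ q * |(inner ℝ x' y : ℝ)| ^ q ≤ 1 * |(inner ℝ x' y : ℝ)| ^ q :=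
            mul_le_mul_of_nonneg_right hγq_le_one (hF0 _ _)
          linarith only [h2]
    -- main pointwise bound
    have hCq_eq : Cq = γ ^ q * γ ^ q := by
      rw [hCq_def, two_mul, Real.rpow_add hγpos]
    have claim1 : ∀ x y : EuclideanSpace ℝ (Fin d), Cq * |(inner ℝ x y : ℝ)| ^ q ≤ H x y := by
      intro x y
      by_cases hx : x = u
      · rw [hx]
        simp only [hH_def, splitFn_u]
        calc Cq * |(inner ℝ u y : ℝ)| ^ q ≤ γ ^ q * (c₁ ^ q * |(inner ℝ u y : ℝ)| ^ q) := by
              rw [hCq_eq, mul_assoc]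
              exact mul_le_mul_of_nonneg_left
                (mul_le_mul_of_nonneg_right hγq_le_c₁q (hF0 _ _)) hγq_pos.le
          _ ≤ γ ^ q * ((|(inner ℝ up y : ℝ)| ^ q + |(inner ℝ um y : ℝ)| ^ q)/2) :=
              mul_le_mul_of_nonneg_left (lem_xu y) hγq_pos.le
          _ = (γ ^ q * |(inner ℝ up y : ℝ)| ^ q + γ ^ q * |(inner ℝ um y : ℝ)| ^ q)/2 := by ring
          _ ≤ (splitFn u u₁ up um vp vm (fun y' => |(inner ℝ up y' : ℝ)| ^ q) y
              + splitFn u u₁ up um vp vm (fun y' => |(inner ℝ um y' : ℝ)| ^ q) y)/2 := by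
              linarith only [lem_y up y, lem_y um y]
      · by_cases hx₁ : x = u₁
        · rw [hx₁]
          simp only [hH_def, splitFn_u₁ (Ne.symm huu₁)]
          calc Cq * |(inner ℝ u₁ y : ℝ)| ^ q ≤ γ ^ q * (c₂ ^ q * |(inner ℝ u₁ y : ℝ)| ^ q) := by
                rw [hCq_eq, mul_assoc]
                exact mul_le_mul_of_nonneg_left
                  (mul_le_mul_of_nonneg_right hγq_le_c₂q (hF0 _ _)) hγq_pos.le
            _ ≤ γ ^ q * ((|(inner ℝ vp y : ℝ)| ^ q + |(inner ℝ vm y : ℝ)| ^ q)/2) :=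
                mul_le_mul_of_nonneg_left (lem_xu₁ y) hγq_pos.le
            _ = (γ ^ q * |(inner ℝ vp y : ℝ)| ^ q + γ ^ q * |(inner ℝ vm y : ℝ)| ^ q)/2 := by ring
            _ ≤ (splitFn u u₁ up um vp vm (fun y' => |(inner ℝ vp y' : ℝ)| ^ q) y
                + splitFn u u₁ up um vp vm (fun y' => |(inner ℝ vm y' : ℝ)| ^ q) y)/2 := by
                linarith only [lem_y vp y, lem_y vm y]
        · simp only [hH_def, splitFn_other hx hx₁]
          calc Cq * |(inner ℝ x y : ℝ)| ^ q ≤ γ ^ q * |(inner ℝ x y : ℝ)| ^ q :=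
                mul_le_mul_of_nonneg_right hCq_le_γq (hF0 _ _)
            _ ≤ _ := lem_y x y
    -- the gain at (u, u₁)
    have hinner_up_u₁ : (inner ℝ up u₁ : ℝ) = t * ρ * β^2 := by
      rw [hipL u₁, horth, hu₁u₁]; ring
    have hinner_um_u₁ : (inner ℝ um u₁ : ℝ) = -(t * ρ * β^2) := by
      rw [himL u₁, horth, hu₁u₁]; ring
    have habs_tab : |t * ρ * β^2| ^ q = t ^ q * (α*β) ^ q := by
      have h1 : t * ρ * β^2 = t * (α*β) := by rw [hρ_def]; field_simp
      rw [h1, abs_of_nonneg (by positivity), Real.mul_rpow ht.le (by positivity)]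
    have claim2 : Cq * (t ^ q * (α*β) ^ q) ≤ H u u₁ := by
      simp only [hH_def, splitFn_u, splitFn_u₁ (Ne.symm huu₁)]
      have h1 : c₂ ^ q * (t ^ q * (α*β) ^ q)
          ≤ (|(inner ℝ up vp : ℝ)| ^ q + |(inner ℝ up vm : ℝ)| ^ q)/2 := by
        have hc : c₂ ^ q * |(inner ℝ up u₁ : ℝ)| ^ q
            ≤ (|(inner ℝ up vp : ℝ)| ^ q + |(inner ℝ up vm : ℝ)| ^ q)/2 := by
          rw [hvpR up, hvmR up, ← hmulpow c₂ _ hc₂pos.le]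
          exact aux_convex hq1 _ _
        rw [hinner_up_u₁, habs_tab] at hc
        exact hc
      have h2 : c₂ ^ q * (t ^ q * (α*β) ^ q)
          ≤ (|(inner ℝ um vp : ℝ)| ^ q + |(inner ℝ um vm : ℝ)| ^ q)/2 := by
        have hc : c₂ ^ q * |(inner ℝ um u₁ : ℝ)| ^ q
            ≤ (|(inner ℝ um vp : ℝ)| ^ q + |(inner ℝ um vm : ℝ)| ^ q)/2 := by
          rw [hvpR um, hvmR um, ← hmulpow c₂ _ hc₂pos.le]
          exact aux_convex hq1 _ _
        rw [hinner_um_u₁, abs_neg, habs_tab] at hc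
        exact hc
      have hle : Cq ≤ c₂ ^ q := le_trans hCq_le_γq hγq_le_c₂q
      have h3 : Cq * (t ^ q * (α*β) ^ q) ≤ c₂ ^ q * (t ^ q * (α*β) ^ q) :=
        mul_le_mul_of_nonneg_right hle (by positivity)
      linarith only [h1, h2, h3]
    -- lower bound for Cq
    have hγsq : 1 - K * t^2 ≤ γ^2 := by
      have he : γ^2 = (1 - t^2)*(1 - (t*(ρ*w))^2) := by
        rw [hγ_def, mul_pow, hc₁sq, hc₂sq]
      rw [he, hK_def]
      have h := mul_nonneg (sq_nonneg t) (sq_nonneg (t * (ρ*w)))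
      have key : (1 - t^2)*(1 - (t*(ρ*w))^2)
          = 1 - (1 + (ρ*w)^2)*t^2 + t^2*(t*(ρ*w))^2 := by ring
      linarith only [h, key]
    have hCq_eq2 : Cq = (γ^2) ^ q := by
      rw [hCq_def, Real.rpow_mul hγpos.le, Real.rpow_two]
    have hC_lb : 1 - q*K*t^2 ≤ Cq := by
      have h0 : (0:ℝ) ≤ 1 - K*t^2 := sub_nonneg.mpr (hKt.trans (by norm_num))
      have h2 : (1 - K*t^2) ^ q ≤ (γ^2) ^ q :=
        Real.rpow_le_rpow h0 hγsq hq0.le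
      have h3 : 1 - q*(K*t^2) ≤ (1 - K*t^2) ^ q :=
        aux_bern hq1 (hKt.trans (by norm_num))
      rw [hCq_eq2]
      calc 1 - q*K*t^2 = 1 - q*(K*t^2) := by ring
        _ ≤ (1 - K*t^2) ^ q := h3
        _ ≤ (γ^2) ^ q := h2
    have hChalf : 1/2 ≤ Cq := by
      have h5 : (1:ℝ)/2 ≤ 1 - q*K*t^2 := by linarith only [hqKt]
      exact h5.trans hC_lb
    -- assemble the sums
    rw [stepA, hHsum]
    have hwnn : ∀ s : EuclideanSpace ℝ (Fin d), (0:ℝ) ≤ (μ {s}).toReal :=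
      fun s => ENNReal.toReal_nonneg
    set G : ℝ := Cq * (t ^ q * (α*β) ^ q) with hG_def
    have hGpos : 0 < G := by positivity
    have hrow : ∀ x : EuclideanSpace ℝ (Fin d),
        ∑ y ∈ S, (μ {y}).toReal * (Cq * |(inner ℝ x y : ℝ)| ^ q)
          ≤ ∑ y ∈ S, (μ {y}).toReal * H x y :=
      fun x => Finset.sum_le_sum fun y _ => mul_le_mul_of_nonneg_left (claim1 x y) (hwnn y)
    have hrow_u : b * G + ∑ y ∈ S, (μ {y}).toReal * (Cq * |(inner ℝ u y : ℝ)| ^ q)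
        ≤ ∑ y ∈ S, (μ {y}).toReal * H u y := by
      rw [← Finset.add_sum_erase S (fun y => (μ {y}).toReal * (Cq * |(inner ℝ u y : ℝ)| ^ q)) hu₁s,
        ← Finset.add_sum_erase S (fun y => (μ {y}).toReal * H u y) hu₁s]
      have h0 : |(inner ℝ u u₁ : ℝ)| ^ q = 0 := by
        rw [horth, abs_zero, Real.zero_rpow (ne_of_gt hq0)]
      rw [h0, ← hb_def]
      have hterm : b * G ≤ b * H u u₁ := mul_le_mul_of_nonneg_left claim2 hb.le
      have hrest : ∑ y ∈ S.erase u₁, (μ {y}).toReal * (Cq * |(inner ℝ u y : ℝ)| ^ q)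
          ≤ ∑ y ∈ S.erase u₁, (μ {y}).toReal * H u y :=
        Finset.sum_le_sum fun y _ => mul_le_mul_of_nonneg_left (claim1 u y) (hwnn y)
      linarith only [hterm, hrest]
    have hCqM : Cq * M = ∑ x ∈ S, (μ {x}).toReal
        * ∑ y ∈ S, (μ {y}).toReal * (Cq * |(inner ℝ x y : ℝ)| ^ q) := by
      rw [hMsum, Finset.mul_sum]
      refine Finset.sum_congr rfl fun x _ => ?_
      rw [Finset.mul_sum, Finset.mul_sum, Finset.mul_sum]
      exact Finset.sum_congr rfl fun y _ => by ring
    have htotal : Cq * M + a * (b * G)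
        ≤ ∑ x ∈ S, (μ {x}).toReal * ∑ y ∈ S, (μ {y}).toReal * H x y := by
      rw [hCqM,
        ← Finset.add_sum_erase S
          (fun x => (μ {x}).toReal * ∑ y ∈ S, (μ {y}).toReal * (Cq * |(inner ℝ x y : ℝ)| ^ q)) hus,
        ← Finset.add_sum_erase S
          (fun x => (μ {x}).toReal * ∑ y ∈ S, (μ {y}).toReal * H x y) hus, ← ha_def]
      have h1 : a * (b * G + ∑ y ∈ S, (μ {y}).toReal * (Cq * |(inner ℝ u y : ℝ)| ^ q))
          ≤ a * ∑ y ∈ S, (μ {y}).toReal * H u y := mul_le_mul_of_nonneg_left hrow_u ha.le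
      have h2 : ∑ x ∈ S.erase u, (μ {x}).toReal
            * ∑ y ∈ S, (μ {y}).toReal * (Cq * |(inner ℝ x y : ℝ)| ^ q)
          ≤ ∑ x ∈ S.erase u, (μ {x}).toReal * ∑ y ∈ S, (μ {y}).toReal * H x y :=
        Finset.sum_le_sum fun x _ => mul_le_mul_of_nonneg_left (hrow x) (hwnn x)
      have h3 : a * (b * G + ∑ y ∈ S, (μ {y}).toReal * (Cq * |(inner ℝ u y : ℝ)| ^ q))
          = a * (b * G) + a * ∑ y ∈ S, (μ {y}).toReal * (Cq * |(inner ℝ u y : ℝ)| ^ q) := by ring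
      linarith only [h1, h2, h3]
    -- final numeric inequality
    have htq : 0 < t ^ q := Real.rpow_pos_of_pos ht _
    have ht2q : t ^ (2-q) ≤ Y/(q*K*M+1) := by
      have h1 : t ^ (2-q) ≤ t₄ ^ (2-q) := Real.rpow_le_rpow ht.le ht_le₄ (by linarith only [hq2])
      have h2 : t₄ ^ (2-q) = Y/(q*K*M+1) := by
        rw [ht₄_def, ← Real.rpow_mul (le_of_lt (by positivity : (0:ℝ) < Y/(q*K*M+1))),
          one_div_mul_cancel (by linarith only [hq2] : (2:ℝ)-q ≠ 0), Real.rpow_one]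
      linarith only [h1, h2]
    have hstrict : q*K*M*t^(2-q) < Y := by
      have hlt1 : q*K*M/(q*K*M+1) < 1 := (div_lt_one hqKM).mpr (by linarith only [])
      have h1 : q*K*M*(Y/(q*K*M+1)) < Y := by
        calc q*K*M*(Y/(q*K*M+1)) = (q*K*M/(q*K*M+1))*Y := by ring
          _ < 1*Y := mul_lt_mul_of_pos_right hlt1 hY
          _ = Y := one_mul Y
      have h2 : q*K*M*t^(2-q) ≤ q*K*M*(Y/(q*K*M+1)) :=
        mul_le_mul_of_nonneg_left ht2q (by positivity)
      exact lt_of_le_of_lt h2 h1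
    have hsplit_t : t ^ q * t ^ (2-q) = t ^ 2 := by
      rw [← Real.rpow_add ht, show q + (2-q) = (2:ℝ) by ring, Real.rpow_two]
    have hYle : t ^ q * Y ≤ a*(b*G) := by
      rw [hG_def, hY_def]
      calc t ^ q * (a*b*(α*β)^q/2) = (a*b*(t^q*(α*β)^q)) * (1/2) := by ring
        _ ≤ (a*b*(t^q*(α*β)^q)) * Cq := mul_le_mul_of_nonneg_left hChalf (by positivity)
        _ = a*(b*(Cq*(t^q*(α*β)^q))) := by ring
    have hchain : (1-Cq)*M < a*(b*G) := by
      have h1 : (1-Cq)*M ≤ q*K*t^2*M :=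
        mul_le_mul_of_nonneg_right (by linarith only [hC_lb]) hM0
      have h2 : q*K*t^2*M = t^q*(q*K*M*t^(2-q)) := by
        rw [← hsplit_t]; ring
      have h3 : t^q*(q*K*M*t^(2-q)) < t^q*Y := by
        exact mul_lt_mul_of_pos_left hstrict htq
      linarith only [h1, h2, h3, hYle]
    linarith only [hchain, htotal]
  exact ⟨ν, hν_prob, hν_fin, hν_iso, hLP, hMom⟩
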